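/- arXiv:2105.03006 — 2 statements merged into one kernel-verified Lean document; each statement's English description precedes it below -/
import Mathlib

section
/- RM satisfies the dominance postulate: in a simple voting game W on [n], (dom-1) if player j weakly dominates player i then RM_i ≤ RM_j, and (dom-2) if player j strictly dominates player i then RM_i < RM_j. -/
open Finset

variable {α : Type*} [Fintype α] [DecidableEq α]

/-- A simple voting game on the player set `α`: a monotone collection of winning
coalitions in which the empty coalition loses and the full coalition wins. -/
def SimpleVotingGame (W : Finset (Finset α)) : Prop :=
  (∀ S T : Finset α, S ∈ W → S ⊆ T → T ∈ W) ∧ (∅ : Finset α) ∉ W ∧ (univ : Finset α) ∈ W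

/-- Player `i` is YES-decisive in the division `S`. -/
def YesDecisive (W : Finset (Finset α)) (i : α) (S : Finset α) : Prop :=
  i ∈ S ∧ S ∈ W ∧ S.erase i ∉ W

/-- Player `i` is NO-decisive in the division `S`. -/
def NoDecisive (W : Finset (Finset α)) (i : α) (S : Finset α) : Prop :=
  i ∉ S ∧ S ∉ W ∧ insert i S ∈ W

/-- The loyal children of a winning division `S`: the winning divisions `S \ {k}`, `k ∈ S`. -/
def LCwin (W : Finset (Finset α)) (S : Finset α) : Finset (Finset α) :=
  (S.image fun k => S.erase k).filter (· ∈ W)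

/-- The loyal children of a losing division `S`: the losing divisions `S ∪ {k}`, `k ∉ S`. -/
def LCloss (W : Finset (Finset α)) (S : Finset α) : Finset (Finset α) :=
  (Sᶜ.image fun k => insert k S).filter (· ∉ W)

/-- The YES-efficacy score `α⁺_i(S)`: `1` if `i` is YES-decisive in `S`, `0` if `S` is
losing or `i ∉ S`, and otherwise the arithmetic mean of `α⁺_i` over the loyal children. -/
noncomputable def alphaPlus (W : Finset (Finset α)) (i : α) (S : Finset α) : ℝ :=
  if i ∈ S ∧ S ∈ W ∧ S.erase i ∉ W then 1
  else if S ∉ W ∨ i ∉ S then 0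
  else (∑ T ∈ (LCwin W S).attach, alphaPlus W i T.1) / (LCwin W S).card
termination_by S.card
decreasing_by
  obtain ⟨T, hT⟩ := T
  simp only [LCwin, Finset.mem_filter, Finset.mem_image] at hT
  obtain ⟨⟨k, hk, rfl⟩, -⟩ := hT
  simpa using Finset.card_erase_lt_of_mem hk

/-- The NO-efficacy score `α⁻_i(S)`: `1` if `i` is NO-decisive in `S`, `0` if `S` is
winning or `i ∈ S`, and otherwise the arithmetic mean of `α⁻_i` over the loyal children. -/
noncomputable def alphaMinus (W : Finset (Finset α)) (i : α) (S : Finset α) : ℝ :=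
  if i ∉ S ∧ S ∉ W ∧ insert i S ∈ W then 1
  else if S ∈ W ∨ i ∈ S then 0
  else (∑ T ∈ (LCloss W S).attach, alphaMinus W i T.1) / (LCloss W S).card
termination_by Sᶜ.card
decreasing_by
  obtain ⟨T, hT⟩ := T
  simp only [LCloss, Finset.mem_filter, Finset.mem_image] at hT
  obtain ⟨⟨k, hk, rfl⟩, -⟩ := hT
  rw [Finset.compl_insert]
  exact Finset.card_erase_lt_of_mem hk

/-- The efficacy score `α_i(S) = α⁺_i(S) + α⁻_i(S)`. -/
noncomputable def alphaScore (W : Finset (Finset α)) (i : α) (S : Finset α) : ℝ :=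
  alphaPlus W i S + alphaMinus W i S

/-- The Recursive Measure of YES-voting power (a priori, equiprobable divisions). -/
noncomputable def RMplus (W : Finset (Finset α)) (i : α) : ℝ :=
  (1 / 2 ^ Fintype.card α) * ∑ S : Finset α, alphaPlus W i S

/-- The Recursive Measure of NO-voting power (a priori, equiprobable divisions). -/
noncomputable def RMminus (W : Finset (Finset α)) (i : α) : ℝ :=
  (1 / 2 ^ Fintype.card α) * ∑ S : Finset α, alphaMinus W i S

/-- The Recursive Measure of voting power of player `i` (a priori):
`RM_i = 2^{-m} · Σ_S α_i(S)` where `m` is the number of players. -/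
noncomputable def RM (W : Finset (Finset α)) (i : α) : ℝ :=
  (1 / 2 ^ Fintype.card α) * ∑ S : Finset α, alphaScore W i S

/-- `d` is a dummy voter: `d` is decisive in no division. -/
def IsDummy (W : Finset (Finset α)) (d : α) : Prop :=
  ∀ S : Finset α, d ∉ S → (insert d S ∈ W ↔ S ∈ W)

/-- Player `j` weakly dominates player `i`. -/
def WeaklyDominates (W : Finset (Finset α)) (j i : α) : Prop :=
  ∀ S : Finset α, i ∉ S → j ∉ S → insert i S ∈ W → insert j S ∈ W

/-- `What` is the game obtained from `W` by player `j` donating its vote to player `i`. -/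
def Donation (W What : Finset (Finset α)) (i j : α) : Prop :=
  ∀ S : Finset α, i ∉ S → j ∉ S →
    (insert i (insert j S) ∈ What ↔ insert i (insert j S) ∈ W) ∧
    (insert i S ∈ What ↔ insert i (insert j S) ∈ W) ∧
    (insert j S ∈ What ↔ S ∈ W) ∧
    (S ∈ What ↔ S ∈ W)

/-- `What` is obtained from `W` by inducing a (weak, symmetric) quarrel between `i` and `j`. -/
def Quarrel (W What : Finset (Finset α)) (i j : α) : Prop :=
  ∀ S : Finset α, i ∉ S → j ∉ S →
    (insert i (insert j S) ∈ What ↔ (insert i S ∈ W ∨ insert j S ∈ W)) ∧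
    (S ∈ What ↔ (insert i S ∈ W ∧ insert j S ∈ W)) ∧
    (insert i S ∈ What ↔ insert i S ∈ W) ∧
    (insert j S ∈ What ↔ insert j S ∈ W)

/-- The voting-independent (product) probability of a division `S`, given the
individual YES-vote probabilities `p`. -/
noncomputable def prodDist (p : α → ℝ) (S : Finset α) : ℝ :=
  (∏ k ∈ S, p k) * ∏ k ∈ Sᶜ, (1 - p k)

/-- The generalized Recursive Measure of YES-voting power under a
voting-independent probability distribution with vote probabilities `p`. -/
noncomputable def RMplusP (W : Finset (Finset α)) (p : α → ℝ) (i : α) : ℝ :=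
  ∑ S : Finset α, alphaPlus W i S * prodDist p S

/-- The generalized Recursive Measure of NO-voting power under a
voting-independent probability distribution with vote probabilities `p`. -/
noncomputable def RMminusP (W : Finset (Finset α)) (p : α → ℝ) (i : α) : ℝ :=
  ∑ S : Finset α, alphaMinus W i S * prodDist p S

/-!
Let `σ` swap players `i` and `j`. If `j` weakly dominates `i`, then `σ` maps winning divisions
containing `i` to winning ones and losing divisions not containing `i` to losing ones. Induction
along the recursion gives `α⁺_i(S) ≤ α⁺_j(σ S)`: `σ` (or the identity, for the one child `S \ {i}`
that `σ` can make losing) injects the loyal children of `S` into those of `σ S`, and `j` is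
YES-decisive in every child of `σ S` that is missed, so the average can only grow. The NO-score in
`W` is the YES-score at the complement in the dual game `{S | Sᶜ ∉ W}`, where `j` still dominates
`i`. Summing over the bijection `σ` gives (dom-1). For (dom-2), a coalition `S` with `S ∪ {j}`
winning and `S ∪ {i}` losing gives a strict gap at `S ∪ {i}`: there `i` scores `0`, while `j` is
YES-decisive in `σ (S ∪ {i}) = S ∪ {j}`.
-/

section Swap

variable {β : Type*} [DecidableEq β]

def swapPlayers (i j : β) (S : Finset β) : Finset β :=
  S.map (Equiv.swap i j).toEmbedding

variable {i j : β} {S : Finset β}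

lemma mem_swapPlayers {a : β} : a ∈ swapPlayers i j S ↔ Equiv.swap i j a ∈ S := by
  rw [swapPlayers, mem_map_equiv, Equiv.symm_swap]

@[simp]
lemma swapPlayers_swapPlayers : swapPlayers i j (swapPlayers i j S) = S := by
  ext a
  simp only [mem_swapPlayers, Equiv.swap_apply_self]

lemma swapPlayers_involutive (i j : β) : Function.Involutive (swapPlayers i j) :=
  fun _ => swapPlayers_swapPlayers

lemma swapPlayers_insert (a : β) :
    swapPlayers i j (insert a S) = insert (Equiv.swap i j a) (swapPlayers i j S) :=
  map_insert _ _ _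

lemma swapPlayers_erase (a : β) :
    swapPlayers i j (S.erase a) = (swapPlayers i j S).erase (Equiv.swap i j a) :=
  map_erase _ _ _

lemma swapPlayers_comm (i j : β) : swapPlayers i j = swapPlayers j i := by
  funext S
  rw [swapPlayers, swapPlayers, Equiv.swap_comm]

lemma swapPlayers_eq_self (h : i ∈ S ↔ j ∈ S) : swapPlayers i j S = S := by
  ext a
  rw [mem_swapPlayers, Equiv.swap_apply_def]
  split_ifs with hai haj
  · subst hai; exact h.symm
  · subst haj; exact h
  · rfl

lemma swapPlayers_of_mem_of_notMem (hi : i ∈ S) (hj : j ∉ S) :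
    swapPlayers i j S = insert j (S.erase i) := by
  ext a
  rw [mem_swapPlayers, Equiv.swap_apply_def, mem_insert, mem_erase]
  split_ifs with hai haj
  · subst hai; simp [hj, ne_of_mem_of_not_mem hi hj]
  · subst haj; simp [hi]
  · simp [hai, haj]

end Swap

theorem Function.Involutive.injOn_ite_mem {γ : Type*} [DecidableEq γ] {σ : γ → γ}
    (hσ : Function.Involutive σ) (s : Finset γ) :
    Set.InjOn (fun x => if σ x ∈ s then σ x else x) s := by
  intro x hx y hy hxy
  dsimp only at hxy
  split_ifs at hxy with hσx hσy hσy
  · exact hσ.injective hxy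
  · exact absurd (by rwa [← hxy, hσ x]) hσy
  · exact absurd (by rwa [hxy, hσ y]) hσx
  · exact hxy

theorem sum_div_card_le_sum_div_card_of_injOn {γ δ : Type*} [DecidableEq δ]
    {C : Finset γ} {C' : Finset δ} {f : γ → ℝ} {g : δ → ℝ} {φ : γ → δ}
    (hφ : Set.MapsTo φ C C') (hinj : Set.InjOn φ C) (hfg : ∀ T ∈ C, f T ≤ g (φ T))
    (hf : ∀ T ∈ C, f T ≤ 1) (hg : ∀ T ∈ C', T ∉ C.image φ → g T = 1) :
    (∑ T ∈ C, f T) / #C ≤ (∑ T ∈ C', g T) / #C' := by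
  have himage : C.image φ ⊆ C' := by simpa [← coe_subset] using hφ.image_subset
  have hcard : #(C.image φ) = #C := card_image_of_injOn hinj
  have hle : #C ≤ #C' := hcard ▸ card_le_card himage
  have hsum_g : ∑ T ∈ C', g T = ∑ T ∈ C, g (φ T) + (#C' - #C : ℝ) := by
    rw [← sum_sdiff himage, sum_image hinj, sum_congr rfl fun T hT => hg T (mem_sdiff.1 hT).1
      (mem_sdiff.1 hT).2, sum_const, card_sdiff_of_subset himage, hcard, nsmul_one,
      Nat.cast_sub hle]
    ring
  have hsum_f : ∑ T ∈ C, f T ≤ ∑ T ∈ C, g (φ T) := sum_le_sum hfg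
  have hsum_f_le : ∑ T ∈ C, f T ≤ #C := by simpa using sum_le_sum hf
  rcases (#C).eq_zero_or_pos with hC | hC
  · rw [hC, Nat.cast_zero, div_zero]
    rw [card_eq_zero.1 hC, sum_empty] at hsum_g
    rw [hsum_g, card_empty, Nat.cast_zero, zero_add, sub_zero]
    positivity
  have hle' : (#C : ℝ) ≤ #C' := by exact_mod_cast hle
  rw [div_le_div_iff₀ (by positivity) (by exact_mod_cast hC.trans_le hle), hsum_g]
  nlinarith

section Scores

variable {β : Type*} [DecidableEq β] {W : Finset (Finset β)} {i j : β} {S T : Finset β}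

lemma mem_LCwin : T ∈ LCwin W S ↔ (∃ k ∈ S, S.erase k = T) ∧ T ∈ W := by
  simp only [LCwin, mem_filter, mem_image]

lemma card_lt_of_mem_LCwin (hT : T ∈ LCwin W S) : #T < #S := by
  obtain ⟨⟨k, hk, rfl⟩, -⟩ := mem_LCwin.1 hT
  exact card_erase_lt_of_mem hk

lemma alphaPlus_eq_one (h : YesDecisive W i S) : alphaPlus W i S = 1 := by
  rw [alphaPlus]
  exact if_pos h

lemma alphaPlus_eq_zero (h : S ∉ W ∨ i ∉ S) : alphaPlus W i S = 0 := by
  rw [alphaPlus, if_neg fun hd => by tauto, if_pos h]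

lemma alphaPlus_eq_mean (hi : i ∈ S) (hS : S ∈ W) (h : S.erase i ∈ W) :
    alphaPlus W i S = (∑ T ∈ LCwin W S, alphaPlus W i T) / #(LCwin W S) := by
  rw [alphaPlus, if_neg (by tauto), if_neg (by tauto), sum_attach]

variable (W i) in
lemma alphaPlus_nonneg (S : Finset β) : 0 ≤ alphaPlus W i S := by
  rw [alphaPlus]
  split_ifs
  · exact zero_le_one
  · exact le_rfl
  · exact div_nonneg (sum_nonneg fun T _ => alphaPlus_nonneg T) (Nat.cast_nonneg _)
termination_by #S
decreasing_by exact card_lt_of_mem_LCwin T.2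

variable (W i) in
lemma alphaPlus_le_one (S : Finset β) : alphaPlus W i S ≤ 1 := by
  rw [alphaPlus]
  split_ifs
  · exact le_rfl
  · exact zero_le_one
  · refine div_le_one_of_le₀ ?_ (Nat.cast_nonneg _)
    exact (sum_le_sum fun T _ => alphaPlus_le_one T.1).trans_eq (by simp)
termination_by #S
decreasing_by exact card_lt_of_mem_LCwin T.2

end Scores

section Dominance

variable {β : Type*} [DecidableEq β] {W : Finset (Finset β)} {i j : β} {S T : Finset β}

namespace WeaklyDominates

lemma swapPlayers_mem (h : WeaklyDominates W j i) (hS : S ∈ W) (hi : i ∈ S) :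
    swapPlayers i j S ∈ W := by
  by_cases hj : j ∈ S
  · rwa [swapPlayers_eq_self (iff_of_true hi hj)]
  · rw [swapPlayers_of_mem_of_notMem hi hj]
    exact h _ (notMem_erase i S) (fun h' => hj (mem_of_mem_erase h')) (by rwa [insert_erase hi])

lemma swapPlayers_notMem (h : WeaklyDominates W j i) (hS : S ∉ W) (hi : i ∉ S) :
    swapPlayers i j S ∉ W := by
  by_cases hj : j ∈ S
  · rw [swapPlayers_comm, swapPlayers_of_mem_of_notMem hj hi]
    intro hσS
    have hS' := h _ (fun h' => hi (mem_of_mem_erase h')) (notMem_erase j S) hσS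
    rw [insert_erase hj] at hS'
    exact hS hS'
  · rwa [swapPlayers_eq_self (iff_of_false hi hj)]

lemma yesDecisive_swapPlayers (h : WeaklyDominates W j i) (hd : YesDecisive W i S) :
    YesDecisive W j (swapPlayers i j S) := by
  obtain ⟨hi, hS, hSi⟩ := hd
  refine ⟨mem_swapPlayers.2 (by rwa [Equiv.swap_apply_right]), h.swapPlayers_mem hS hi, ?_⟩
  have herase : (swapPlayers i j S).erase j = swapPlayers i j (S.erase i) := by
    rw [swapPlayers_erase, Equiv.swap_apply_left]
  rw [herase]
  exact h.swapPlayers_notMem hSi (notMem_erase i S)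

end WeaklyDominates

def swapIfWinning (W : Finset (Finset β)) (i j : β) (T : Finset β) : Finset β :=
  if swapPlayers i j T ∈ W then swapPlayers i j T else T

lemma mapsTo_swapIfWinning (h : WeaklyDominates W j i) (hi : i ∈ S) :
    Set.MapsTo (swapIfWinning W i j) (LCwin W S) (LCwin W (swapPlayers i j S)) := by
  intro T hT
  obtain ⟨⟨k, hk, rfl⟩, hTW⟩ := mem_LCwin.1 hT
  unfold swapIfWinning
  split_ifs with hσT
  · refine mem_LCwin.2 ⟨⟨Equiv.swap i j k, ?_, (swapPlayers_erase k).symm⟩, hσT⟩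
    rwa [mem_swapPlayers, Equiv.swap_apply_self]
  have hki : k = i := by
    by_contra hki
    exact hσT (h.swapPlayers_mem hTW (mem_erase.2 ⟨Ne.symm hki, hi⟩))
  subst hki
  refine mem_LCwin.2 ⟨?_, hTW⟩
  by_cases hj : j ∈ S
  · rw [swapPlayers_eq_self (iff_of_true hi hj)]
    exact ⟨k, hi, rfl⟩
  · rw [swapPlayers_of_mem_of_notMem hi hj]
    exact ⟨j, mem_insert_self j _, erase_insert fun h' => hj (mem_of_mem_erase h')⟩

lemma yesDecisive_of_notMem_image_swapIfWinning (hW : IsUpperSet (W : Set (Finset β)))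
    (h : WeaklyDominates W j i) (hi : i ∈ S) (hSi : S.erase i ∈ W)
    (hT : T ∈ LCwin W (swapPlayers i j S)) (hT' : T ∉ (LCwin W S).image (swapIfWinning W i j)) :
    YesDecisive W j T := by
  obtain ⟨⟨k, hk, rfl⟩, hTW⟩ := mem_LCwin.1 hT
  have hσT : swapPlayers i j ((swapPlayers i j S).erase k) = S.erase (Equiv.swap i j k) := by
    rw [swapPlayers_erase, swapPlayers_swapPlayers]
  -- otherwise `swapIfWinning` would send this child of `S` to `T`
  have hlose : S.erase (Equiv.swap i j k) ∉ W := by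
    intro hw
    refine hT' (mem_image.2 ⟨_, mem_LCwin.2 ⟨⟨_, mem_swapPlayers.1 hk, rfl⟩, hw⟩, ?_⟩)
    rw [swapIfWinning, ← hσT, swapPlayers_swapPlayers, if_pos hTW]
  have hkj : k ≠ j := by
    rintro rfl
    exact hlose (by rwa [Equiv.swap_apply_right])
  have hj : j ∈ swapPlayers i j S := by rwa [mem_swapPlayers, Equiv.swap_apply_right]
  refine ⟨mem_erase.2 ⟨hkj.symm, hj⟩, hTW, ?_⟩
  have herase : ((swapPlayers i j S).erase k).erase j
      = swapPlayers i j ((S.erase (Equiv.swap i j k)).erase i) := by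
    rw [swapPlayers_erase, swapPlayers_erase, Equiv.swap_apply_left, Equiv.swap_apply_self]
  rw [herase]
  exact h.swapPlayers_notMem (fun hw => hlose (hW (erase_subset i _) hw)) (notMem_erase i _)

theorem alphaPlus_le_alphaPlus_swapPlayers (hW : IsUpperSet (W : Set (Finset β)))
    (h : WeaklyDominates W j i) (S : Finset β) :
    alphaPlus W i S ≤ alphaPlus W j (swapPlayers i j S) := by
  by_cases hi : i ∈ S
  swap
  · rw [alphaPlus_eq_zero (Or.inr hi)]
    exact alphaPlus_nonneg W j _
  by_cases hS : S ∈ W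
  swap
  · rw [alphaPlus_eq_zero (Or.inl hS)]
    exact alphaPlus_nonneg W j _
  by_cases hSi : S.erase i ∈ W
  swap
  · rw [alphaPlus_eq_one ⟨hi, hS, hSi⟩, alphaPlus_eq_one (h.yesDecisive_swapPlayers ⟨hi, hS, hSi⟩)]
  by_cases hd : YesDecisive W j (swapPlayers i j S)
  · rw [alphaPlus_eq_one hd]
    exact alphaPlus_le_one W i S
  have hj : j ∈ swapPlayers i j S := by rwa [mem_swapPlayers, Equiv.swap_apply_right]
  have hσS : swapPlayers i j S ∈ W := h.swapPlayers_mem hS hi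
  have hσSj : (swapPlayers i j S).erase j ∈ W := not_not.1 fun hσSj => hd ⟨hj, hσS, hσSj⟩
  rw [alphaPlus_eq_mean hi hS hSi, alphaPlus_eq_mean hj hσS hσSj]
  refine sum_div_card_le_sum_div_card_of_injOn (mapsTo_swapIfWinning h hi)
    (((swapPlayers_involutive i j).injOn_ite_mem W).mono fun T hT => (mem_LCwin.1 hT).2) ?_
    (fun T _ => alphaPlus_le_one W i T)
    fun T hT hT' => alphaPlus_eq_one <|
      yesDecisive_of_notMem_image_swapIfWinning hW h hi hSi hT hT'
  intro T hT
  unfold swapIfWinning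
  split_ifs with hσT
  · exact alphaPlus_le_alphaPlus_swapPlayers hW h T
  · rw [alphaPlus_eq_zero (Or.inr fun hiT => hσT (h.swapPlayers_mem (mem_LCwin.1 hT).2 hiT))]
    exact alphaPlus_nonneg W j T
termination_by #S
decreasing_by exact card_lt_of_mem_LCwin hT

end Dominance

section Dual

variable {W : Finset (Finset α)} {i j : α} {S : Finset α}

def dualGame (W : Finset (Finset α)) : Finset (Finset α) :=
  univ.filter fun S => Sᶜ ∉ W

lemma mem_dualGame : S ∈ dualGame W ↔ Sᶜ ∉ W := by
  simp [dualGame]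

lemma isUpperSet_dualGame (hW : IsUpperSet (W : Set (Finset α))) :
    IsUpperSet (dualGame W : Set (Finset α)) := by
  intro S T hST hS
  simp only [mem_coe, mem_dualGame] at hS ⊢
  exact fun hT => hS (hW (compl_le_compl hST) hT)

lemma weaklyDominates_dualGame (h : WeaklyDominates W j i) :
    WeaklyDominates (dualGame W) j i := by
  intro S hi hj hiS
  rw [mem_dualGame] at hiS ⊢
  obtain rfl | hij := eq_or_ne i j
  · exact hiS
  have hiU : (insert i S)ᶜ = insert j (insert i (insert j S))ᶜ := by
    ext x
    simp only [mem_compl, mem_insert]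
    grind
  have hjU : (insert j S)ᶜ = insert i (insert i (insert j S))ᶜ := by
    ext x
    simp only [mem_compl, mem_insert]
    grind
  rw [hiU] at hiS
  rw [hjU]
  exact fun hU => hiS (h _ (by simp) (by simp) hU)

lemma LCwin_dualGame_compl : LCwin (dualGame W) Sᶜ = (LCloss W S).image compl := by
  ext T
  simp only [LCwin, LCloss, mem_filter, mem_image, mem_dualGame]
  constructor
  · rintro ⟨⟨k, hk, rfl⟩, hT⟩
    refine ⟨insert k S, ⟨⟨k, hk, rfl⟩, ?_⟩, compl_insert⟩
    rwa [compl_erase, compl_compl] at hT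
  · rintro ⟨_, ⟨⟨k, hk, rfl⟩, hU⟩, rfl⟩
    exact ⟨⟨k, hk, compl_insert.symm⟩, by rwa [compl_compl]⟩

variable (W i) in
lemma alphaMinus_eq_alphaPlus_dualGame (S : Finset α) :
    alphaMinus W i S = alphaPlus (dualGame W) i Sᶜ := by
  rw [alphaMinus, alphaPlus, LCwin_dualGame_compl, sum_attach, sum_attach,
    sum_image compl_injective.injOn, card_image_of_injective _ compl_injective]
  simp only [mem_compl, mem_dualGame, compl_compl, compl_erase, not_not]
  rw [sum_congr rfl fun T hT => alphaMinus_eq_alphaPlus_dualGame T]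
termination_by #Sᶜ
decreasing_by
  have hT' : Tᶜ ∈ LCwin (dualGame W) Sᶜ := by
    rw [LCwin_dualGame_compl]
    exact mem_image_of_mem _ hT
  exact card_lt_of_mem_LCwin hT'

lemma RMminus_eq_RMplus_dualGame (W : Finset (Finset α)) (i : α) :
    RMminus W i = RMplus (dualGame W) i := by
  simp only [RMminus, RMplus, alphaMinus_eq_alphaPlus_dualGame]
  rw [compl_bijective.sum_comp (alphaPlus (dualGame W) i)]

end Dual

lemma RM_eq_RMplus_add_RMminus (W : Finset (Finset α)) (i : α) :
    RM W i = RMplus W i + RMminus W i := by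
  simp only [RM, RMplus, RMminus, alphaScore, sum_add_distrib, mul_add]

namespace WeaklyDominates

variable {W : Finset (Finset α)} {i j : α}

lemma RMplus_le (hW : IsUpperSet (W : Set (Finset α))) (h : WeaklyDominates W j i) :
    RMplus W i ≤ RMplus W j := by
  refine mul_le_mul_of_nonneg_left ?_ (by positivity)
  calc ∑ S, alphaPlus W i S ≤ ∑ S, alphaPlus W j (swapPlayers i j S) :=
        sum_le_sum fun S _ => alphaPlus_le_alphaPlus_swapPlayers hW h S
    _ = ∑ S, alphaPlus W j S := (swapPlayers_involutive i j).bijective.sum_comp _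

lemma RMminus_le (hW : IsUpperSet (W : Set (Finset α))) (h : WeaklyDominates W j i) :
    RMminus W i ≤ RMminus W j := by
  simpa only [RMminus_eq_RMplus_dualGame] using
    (weaklyDominates_dualGame h).RMplus_le (isUpperSet_dualGame hW)

lemma RMplus_lt (hW : IsUpperSet (W : Set (Finset α))) (h : WeaklyDominates W j i)
    (hji : ¬ WeaklyDominates W i j) : RMplus W i < RMplus W j := by
  obtain ⟨S, hj, hi, hjS, hiS⟩ : ∃ S, j ∉ S ∧ i ∉ S ∧ insert j S ∈ W ∧ insert i S ∉ W := by
    simpa [WeaklyDominates] using hji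
  have hσ : swapPlayers i j (insert i S) = insert j S := by
    rw [swapPlayers_insert, Equiv.swap_apply_left, swapPlayers_eq_self (iff_of_false hi hj)]
  have hdec : YesDecisive W j (insert j S) := by
    refine ⟨mem_insert_self j S, hjS, ?_⟩
    rw [erase_insert hj]
    exact fun hS => hiS (hW (subset_insert i S) hS)
  have hlt : alphaPlus W i (insert i S) < alphaPlus W j (swapPlayers i j (insert i S)) := by
    rw [hσ, alphaPlus_eq_zero (Or.inl hiS), alphaPlus_eq_one hdec]
    exact one_pos
  refine mul_lt_mul_of_pos_left ?_ (by positivity)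
  calc ∑ S, alphaPlus W i S < ∑ S, alphaPlus W j (swapPlayers i j S) :=
        sum_lt_sum (fun S _ => alphaPlus_le_alphaPlus_swapPlayers hW h S)
          ⟨insert i S, mem_univ _, hlt⟩
    _ = ∑ S, alphaPlus W j S := (swapPlayers_involutive i j).bijective.sum_comp _

end WeaklyDominates

/-- RM satisfies the dominance postulate (dom-1) and (dom-2). -/
theorem rm_dominance {n : ℕ} (W : Finset (Finset (Fin n)))
    (hW : SimpleVotingGame W) (i j : Fin n) :
    (WeaklyDominates W j i → RM W i ≤ RM W j) ∧
    (WeaklyDominates W j i ∧ ¬ WeaklyDominates W i j → RM W i < RM W j) := by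
  have hmono : IsUpperSet (W : Set (Finset (Fin n))) := fun S T hST hS => hW.1 S T hS hST
  simp only [RM_eq_RMplus_add_RMminus]
  exact ⟨fun h => add_le_add (h.RMplus_le hmono) (h.RMminus_le hmono),
    fun ⟨h, hji⟩ => add_lt_add_of_lt_of_le (h.RMplus_lt hmono hji) (h.RMminus_le hmono)⟩
end

section
/- Let W be a simple voting game on [n] and let Ŵ be the game obtained when player j donates its vote to player i. Then for every S⊆[n] with i,j∈S, the NO-efficacy scores satisfy α̂⁻_i(S\{i,j}) ≥ max( α⁻_i(S\{i,j}), α⁻_j(S\{i,j}) ) and α̂⁻_i(S\{i}) ≥ max( α⁻_i(S\{i}), α⁻_j(S\{j}) ), where α̂ denotes efficacy scores computed in Ŵ and α those computed in W. -/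
open Finset

variable {α : Type*} [Fintype α] [DecidableEq α]

/-!
In the donated game a division without `i` wins only if it won before, and a division containing
`i` wins if it won before. Such a relation between two games already forces a comparison of
NO-efficacy scores, proved by following the recursion defining `α⁻`: if `W` is monotone and a
permutation `σ` of the players sends losing divisions of `W` without `a` to losing divisions of
`W'`, and winning divisions of `W` containing `a` to winning divisions of `W'`, then
`α⁻_a(S) ≤ α'⁻_{σ a}(σ S)`. Indeed `σ` embeds the loyal children of `S` into those of `σ S`, and
`σ a` is NO-decisive in every loyal child of `σ S` that is not hit; as all scores lie in `[0, 1]`,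
this can only raise the mean.
Taking `σ = id` gives `α⁻_i ≤ α̂⁻_i`, and taking for `σ` the transposition of `i` and `j` gives
`α⁻_j(S) ≤ α̂⁻_i(σ S)`; both inequalities of the theorem are instances of these two.
-/

section AlphaMinus

variable {W : Finset (Finset α)} {a : α} {S : Finset α}

omit [DecidableEq α] in
theorem SimpleVotingGame.isUpperSet (hW : SimpleVotingGame W) :
    IsUpperSet (W : Set (Finset α)) :=
  fun S T hST hS => hW.1 S T hS hST

def LClossPlayers (W : Finset (Finset α)) (S : Finset α) : Finset α :=
  Sᶜ.filter fun k => insert k S ∉ W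

theorem mem_LClossPlayers {k : α} : k ∈ LClossPlayers W S ↔ k ∉ S ∧ insert k S ∉ W := by
  simp [LClossPlayers]

theorem card_compl_insert_lt {k : α} (hk : k ∉ S) : #(insert k S)ᶜ < #Sᶜ := by
  rw [compl_insert]
  exact card_erase_lt_of_mem (mem_compl.2 hk)

theorem card_compl_lt_of_mem_LCloss {T : Finset α} (hT : T ∈ LCloss W S) : #Tᶜ < #Sᶜ := by
  obtain ⟨⟨k, hk, rfl⟩, -⟩ := by simpa only [LCloss, mem_filter, mem_image] using hT
  exact card_compl_insert_lt (mem_compl.1 hk)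

theorem alphaMinus_eq_one (h : NoDecisive W a S) : alphaMinus W a S = 1 := by
  rw [alphaMinus]
  exact if_pos h

theorem alphaMinus_eq_zero_of_mem (h : a ∈ S) : alphaMinus W a S = 0 := by
  rw [alphaMinus, if_neg fun h' => h'.1 h, if_pos (Or.inr h)]

theorem alphaMinus_eq_zero_of_win (h : S ∈ W) : alphaMinus W a S = 0 := by
  rw [alphaMinus, if_neg fun h' => h'.2.1 h, if_pos (Or.inl h)]

theorem alphaMinus_eq_mean (ha : a ∉ S) (hS : S ∉ W) (haS : insert a S ∉ W) :
    alphaMinus W a S =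
      (∑ k ∈ LClossPlayers W S, alphaMinus W a (insert k S)) / #(LClossPlayers W S) := by
  have hinj : Set.InjOn (insert · S) (LClossPlayers W S : Set α) := fun k hk _ _ hkl =>
    (insert_inj (mem_LClossPlayers.1 hk).1).1 hkl
  have hLC : LCloss W S = (LClossPlayers W S).image (insert · S) := by
    rw [LCloss, LClossPlayers, filter_image]
  rw [alphaMinus, if_neg fun h => haS h.2.2, if_neg (by tauto), sum_attach (LCloss W S), hLC,
    sum_image hinj, card_image_of_injOn hinj]

theorem alphaMinus_nonneg (W : Finset (Finset α)) (a : α) (S : Finset α) :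
    0 ≤ alphaMinus W a S := by
  rw [alphaMinus]
  split_ifs
  · exact zero_le_one
  · exact le_rfl
  · exact div_nonneg (sum_nonneg fun T _ => alphaMinus_nonneg W a T) (Nat.cast_nonneg _)
termination_by #Sᶜ
decreasing_by exact card_compl_lt_of_mem_LCloss T.2

theorem alphaMinus_le_one (W : Finset (Finset α)) (a : α) (S : Finset α) :
    alphaMinus W a S ≤ 1 := by
  rw [alphaMinus]
  split_ifs
  · exact le_rfl
  · exact zero_le_one
  · refine div_le_one_of_le₀ ?_ (Nat.cast_nonneg _)
    calc ∑ T ∈ (LCloss W S).attach, alphaMinus W a T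
        ≤ ∑ _T ∈ (LCloss W S).attach, (1 : ℝ) :=
          sum_le_sum fun T _ => alphaMinus_le_one W a T
      _ = #(LCloss W S) := by simp
termination_by #Sᶜ
decreasing_by exact card_compl_lt_of_mem_LCloss T.2

end AlphaMinus

theorem sum_div_card_le_sum_div_card {β γ : Type*} [DecidableEq γ] {K : Finset β}
    {D : Finset γ} {f : β → ℝ} {g : γ → ℝ} (e : β ↪ γ) (hKD : K.map e ⊆ D)
    (hfg : ∀ k ∈ K, f k ≤ g (e k)) (hg : ∀ d ∈ D \ K.map e, g d = 1) (hf : ∀ k ∈ K, f k ≤ 1) :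
    (∑ k ∈ K, f k) / #K ≤ (∑ d ∈ D, g d) / #D := by
  have hcard : #K ≤ #D := card_map e ▸ card_le_card hKD
  have hfK : ∑ k ∈ K, f k ≤ #K := by simpa using sum_le_sum hf
  have hgD : (#D - #K : ℝ) + ∑ k ∈ K, f k ≤ ∑ d ∈ D, g d := by
    rw [← sum_sdiff hKD, sum_congr rfl hg, sum_map, sum_const, card_sdiff_of_subset hKD,
      card_map, nsmul_eq_mul, mul_one, Nat.cast_sub hcard]
    gcongr with k hk
    exact hfg k hk
  rcases (#K).eq_zero_or_pos with hK | hK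
  · obtain rfl := card_eq_zero.1 hK
    rw [sum_empty, zero_div]
    simp only [card_empty, Nat.cast_zero, sub_zero, sum_empty, add_zero] at hgD
    exact div_nonneg ((Nat.cast_nonneg _).trans hgD) (Nat.cast_nonneg _)
  · have hD : (0 : ℝ) < #D := by exact_mod_cast hK.trans_le hcard
    have hcard' : (#K : ℝ) ≤ #D := by exact_mod_cast hcard
    rw [div_le_div_iff₀ (by exact_mod_cast hK) hD]
    nlinarith

theorem alphaMinus_le_alphaMinus_map {W W' : Finset (Finset α)}
    (hW : IsUpperSet (W : Set (Finset α))) (σ : Equiv.Perm α) {a : α}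
    (hlose : ∀ S, a ∉ S → S ∉ W → S.map σ.toEmbedding ∉ W')
    (hwin : ∀ S, a ∉ S → insert a S ∈ W → (insert a S).map σ.toEmbedding ∈ W')
    (S : Finset α) : alphaMinus W a S ≤ alphaMinus W' (σ a) (S.map σ.toEmbedding) := by
  by_cases haS : a ∈ S
  · rw [alphaMinus_eq_zero_of_mem haS]
    exact alphaMinus_nonneg _ _ _
  by_cases hS : S ∈ W
  · rw [alphaMinus_eq_zero_of_win hS]
    exact alphaMinus_nonneg _ _ _
  have map_insert (k : α) (T : Finset α) :
      (insert k T).map σ.toEmbedding = insert (σ k) (T.map σ.toEmbedding) :=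
    Finset.map_insert _ _ _
  have ha' : σ a ∉ S.map σ.toEmbedding := by simpa using haS
  have hS' : S.map σ.toEmbedding ∉ W' := hlose S haS hS
  by_cases haW : insert a S ∈ W
  · rw [alphaMinus_eq_one ⟨ha', hS', map_insert a S ▸ hwin S haS haW⟩]
    exact alphaMinus_le_one _ _ _
  by_cases haW' : insert (σ a) (S.map σ.toEmbedding) ∈ W'
  · rw [alphaMinus_eq_one ⟨ha', hS', haW'⟩]
    exact alphaMinus_le_one _ _ _
  rw [alphaMinus_eq_mean haS hS haW, alphaMinus_eq_mean ha' hS' haW']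
  refine sum_div_card_le_sum_div_card σ.toEmbedding ?_ ?_ ?_ fun _ _ => alphaMinus_le_one _ _ _
  · intro d hd
    obtain ⟨k, hk, rfl⟩ := mem_map.1 hd
    obtain ⟨hkS, hkW⟩ := mem_LClossPlayers.1 hk
    refine mem_LClossPlayers.2 ⟨by simpa using hkS, ?_⟩
    rcases eq_or_ne k a with rfl | hka
    · exact haW'
    · rw [Equiv.coe_toEmbedding, ← map_insert]
      exact hlose _ (by simp [haS, hka.symm]) hkW
  · intro k hk
    rw [Equiv.coe_toEmbedding, ← map_insert]
    exact alphaMinus_le_alphaMinus_map hW σ hlose hwin (insert k S)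
  · intro d hd
    obtain ⟨hdS', hdW'⟩ := mem_LClossPlayers.1 (mem_sdiff.1 hd).1
    obtain ⟨k, rfl⟩ := σ.surjective d
    have hkS : k ∉ S := by simpa using hdS'
    have hkW : insert k S ∈ W := by
      by_contra hkW
      exact (mem_sdiff.1 hd).2 (mem_map_of_mem _ (mem_LClossPlayers.2 ⟨hkS, hkW⟩))
    have hka : k ≠ a := by rintro rfl; exact haW hkW
    refine alphaMinus_eq_one ⟨by simp [haS, hka.symm], hdW', ?_⟩
    rw [← map_insert k S, ← map_insert a]
    exact hwin _ (by simp [haS, hka.symm]) (hW (subset_insert a _) hkW)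
termination_by #Sᶜ
decreasing_by exact card_compl_insert_lt (mem_LClossPlayers.1 hk).1

namespace Donation

variable {W What : Finset (Finset α)} {i j : α} {S : Finset α}

omit [Fintype α] in
theorem mem_iff (hdon : Donation W What i j) (hi : i ∉ S) : S ∈ What ↔ S.erase j ∈ W := by
  by_cases hj : j ∈ S
  · have hiT : i ∉ S.erase j := fun h => hi (mem_of_mem_erase h)
    simpa [insert_erase hj] using (hdon (S.erase j) hiT (notMem_erase j S)).2.2.1
  · simpa [erase_eq_of_notMem hj] using (hdon S hi hj).2.2.2

omit [Fintype α] in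
theorem insert_mem_iff (hdon : Donation W What i j) (hi : i ∉ S) :
    insert i S ∈ What ↔ insert i (insert j S) ∈ W := by
  by_cases hj : j ∈ S
  · have hiT : i ∉ S.erase j := fun h => hi (mem_of_mem_erase h)
    simpa [insert_erase hj, insert_eq_of_mem hj] using (hdon (S.erase j) hiT (notMem_erase j S)).1
  · exact (hdon S hi hj).2.1

theorem alphaMinus_le (hW : IsUpperSet (W : Set (Finset α))) (hdon : Donation W What i j)
    (S : Finset α) : alphaMinus W i S ≤ alphaMinus What i S := by
  have hlose (T : Finset α) (hi : i ∉ T) (hT : T ∉ W) : T ∉ What := by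
    rw [hdon.mem_iff hi]
    exact fun h => hT (hW (erase_subset j T) h)
  have hwin (T : Finset α) (hi : i ∉ T) (hT : insert i T ∈ W) : insert i T ∈ What := by
    rw [hdon.insert_mem_iff hi]
    exact hW (insert_subset_insert i (subset_insert j T)) hT
  simpa using alphaMinus_le_alphaMinus_map hW (Equiv.refl α) (W' := What)
    (by simpa using hlose) (by simpa using hwin) S

theorem alphaMinus_le_map_swap (hW : IsUpperSet (W : Set (Finset α)))
    (hdon : Donation W What i j) (S : Finset α) :
    alphaMinus W j S ≤ alphaMinus What i (S.map (Equiv.swap i j).toEmbedding) := by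
  have hlose (T : Finset α) (hj : j ∉ T) (hT : T ∉ W) :
      T.map (Equiv.swap i j).toEmbedding ∉ What := by
    rw [hdon.mem_iff (by simpa using hj)]
    refine fun h => hT (hW ?_ h)
    intro x hx
    simp only [mem_erase, mem_map_equiv, Equiv.symm_swap] at hx
    grind
  have hwin (T : Finset α) (hj : j ∉ T) (hT : insert j T ∈ W) :
      (insert j T).map (Equiv.swap i j).toEmbedding ∈ What := by
    rw [Finset.map_insert, Equiv.coe_toEmbedding, Equiv.swap_apply_right,
      hdon.insert_mem_iff (by simpa using hj)]
    refine hW ?_ hT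
    intro x hx
    simp only [mem_insert, mem_map_equiv, Equiv.symm_swap] at hx ⊢
    grind
  simpa using alphaMinus_le_alphaMinus_map hW (Equiv.swap i j) hlose hwin S

end Donation

theorem donation_alphaMinus_general {n : ℕ} (W What : Finset (Finset (Fin n)))
    (hW : SimpleVotingGame W) (i j : Fin n)
    (hdon : Donation W What i j) :
    ∀ S : Finset (Fin n), i ∈ S → j ∈ S →
      max (alphaMinus W i ((S.erase i).erase j)) (alphaMinus W j ((S.erase i).erase j)) ≤
        alphaMinus What i ((S.erase i).erase j) ∧
      max (alphaMinus W i (S.erase i)) (alphaMinus W j (S.erase j)) ≤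
        alphaMinus What i (S.erase i) := by
  intro S hi hj
  have hW' := hW.isUpperSet
  have hswap_T :
      ((S.erase i).erase j).map (Equiv.swap i j).toEmbedding = (S.erase i).erase j := by
    ext x
    simp only [mem_map_equiv, Equiv.symm_swap, mem_erase]
    grind
  have hswap_S : (S.erase j).map (Equiv.swap i j).toEmbedding = S.erase i := by
    rw [map_erase, Equiv.coe_toEmbedding, Equiv.swap_apply_right,
      map_perm fun x hx => ?_]
    grind [Equiv.swap_apply_ne_self_iff]
  constructor
  · refine max_le (hdon.alphaMinus_le hW' _) ?_
    simpa only [hswap_T] using hdon.alphaMinus_le_map_swap hW' ((S.erase i).erase j)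
  · refine max_le (hdon.alphaMinus_le hW' _) ?_
    simpa only [hswap_S] using hdon.alphaMinus_le_map_swap hW' (S.erase j)

/-- donation and NO-efficacy scores. -/
theorem donation_alphaMinus {n : ℕ} (W What : Finset (Finset (Fin n)))
    (hW : SimpleVotingGame W) (i j : Fin n) (hij : i ≠ j)
    (hdon : Donation W What i j) :
    ∀ S : Finset (Fin n), i ∈ S → j ∈ S →
      max (alphaMinus W i ((S.erase i).erase j)) (alphaMinus W j ((S.erase i).erase j)) ≤
        alphaMinus What i ((S.erase i).erase j) ∧
      max (alphaMinus W i (S.erase i)) (alphaMinus W j (S.erase j)) ≤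
        alphaMinus What i (S.erase i) :=
  donation_alphaMinus_general W What hW i j hdon
end
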